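/- arXiv:1308.5444 — 3 statements merged into one kernel-verified Lean document; each statement's English description precedes it below -/
import Mathlib

section
/- Let S be a finite set, and for each i ∈ S let B_i > 0, b_i > 0, x_i ≥ 0 and y_i be real numbers, and set y_i' = y_i + b_i x_i. Let g : ℝ → ℝ be nondecreasing and integrable on every interval [y_i/B_i, y_i'/B_i], let b > 0 and Ȳ ∈ ℝ, and suppose that b_i (g(y_i'/B_i) - 1) ≤ b (g(Ȳ) - 1) for every i ∈ S. Then ∑_{i∈S} b_i x_i - ∑_{i∈S} B_i ∫_{y_i/B_i}^{y_i'/B_i} g(u) du ≥ b (1 - g(Ȳ)) · ∑_{i∈S} x_i. -/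
/-! Each buyer's water level rises from `y/B` to `y'/B`, and since `g` is nondecreasing its
integral over this range is at most `(y' - y)/B · g(y'/B)`. Hence buyer `i` contributes at least
`b_i x_i (1 - g(y_i'/B_i))` to the left-hand side, which the virtual water-level condition bounds
below by `b (1 - g(Ȳ)) x_i`; summing over `S` gives the claim. -/

open intervalIntegral

theorem Monotone.intervalIntegral_le_sub_mul {g : ℝ → ℝ} (hg : Monotone g) {a c : ℝ}
    (hac : a ≤ c) : ∫ u in a..c, g u ≤ (c - a) * g c := by
  calc ∫ u in a..c, g u ≤ ∫ _ in a..c, g c :=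
        integral_mono_on hac hg.intervalIntegrable intervalIntegrable_const
          fun _ hu => hg hu.2
    _ = (c - a) * g c := by rw [integral_const, smul_eq_mul]

theorem Monotone.mul_intervalIntegral_div_le {g : ℝ → ℝ} (hg : Monotone g) {B y d : ℝ}
    (hB : 0 < B) (hd : 0 ≤ d) :
    B * ∫ u in y / B..(y + d) / B, g u ≤ d * g ((y + d) / B) := by
  have hle : y / B ≤ (y + d) / B := by gcongr; linarith
  calc B * ∫ u in y / B..(y + d) / B, g u
      ≤ B * (((y + d) / B - y / B) * g ((y + d) / B)) :=
        mul_le_mul_of_nonneg_left (hg.intervalIntegral_le_sub_mul hle) hB.le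
    _ = d * g ((y + d) / B) := by field_simp; ring

theorem Monotone.mul_one_sub_mul_le_sub_mul_intervalIntegral {g : ℝ → ℝ} (hg : Monotone g)
    {B b x y c Y : ℝ} (hB : 0 < B) (hb : 0 ≤ b) (hx : 0 ≤ x)
    (hvirt : b * (g ((y + b * x) / B) - 1) ≤ c * (g Y - 1)) :
    c * (1 - g Y) * x ≤ b * x - B * ∫ u in y / B..(y + b * x) / B, g u := by
  have hint := hg.mul_intervalIntegral_div_le (y := y) hB (mul_nonneg hb hx)
  nlinarith [mul_le_mul_of_nonneg_right hvirt hx]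

theorem stmt3_general {ι : Type*} (S : Finset ι) (B b x y : ι → ℝ) (g : ℝ → ℝ) (bb Ybar : ℝ)
    (hB : ∀ i ∈ S, 0 < B i) (hb : ∀ i ∈ S, 0 < b i) (hx : ∀ i ∈ S, 0 ≤ x i)
    (hg : Monotone g)
    (hvirt : ∀ i ∈ S, b i * (g ((y i + b i * x i) / B i) - 1) ≤ bb * (g Ybar - 1)) :
    (∑ i ∈ S, b i * x i) -
        (∑ i ∈ S, B i * ∫ u in (y i / B i)..((y i + b i * x i) / B i), g u) ≥
      bb * (1 - g Ybar) * ∑ i ∈ S, x i := by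
  rw [ge_iff_le, ← Finset.sum_sub_distrib, Finset.mul_sum]
  exact Finset.sum_le_sum fun i hi =>
    hg.mul_one_sub_mul_le_sub_mul_intervalIntegral (hB i hi) (hb i hi).le (hx i hi) (hvirt i hi)

/-- Monotonicity-property inequality for virtual water-filling (OnBAP):
with budgets `B i > 0`, bids `b i > 0`, allocations `x i ≥ 0`, old levels `y i`,
new levels `y i + b i * x i`, a nondecreasing `g` integrable on the relevant
normalized intervals, and the virtual water-level condition
`b i (g((y i + b i x i)/B i) - 1) ≤ bb (g Ȳ - 1)` for all `i ∈ S`, one has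
`∑ b i x i - ∑ B i ∫ g ≥ bb (1 - g Ȳ) ∑ x i`. -/
theorem stmt3 {ι : Type*} (S : Finset ι) (B b x y : ι → ℝ) (g : ℝ → ℝ) (bb Ybar : ℝ)
    (hB : ∀ i ∈ S, 0 < B i) (hb : ∀ i ∈ S, 0 < b i) (hx : ∀ i ∈ S, 0 ≤ x i)
    (hg : Monotone g)
    (hint : ∀ i ∈ S,
      IntervalIntegrable g MeasureTheory.volume (y i / B i) ((y i + b i * x i) / B i))
    (hbb : 0 < bb)
    (hvirt : ∀ i ∈ S, b i * (g ((y i + b i * x i) / B i) - 1) ≤ bb * (g Ybar - 1)) :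
    (∑ i ∈ S, b i * x i) -
        (∑ i ∈ S, B i * ∫ u in (y i / B i)..((y i + b i * x i) / B i), g u) ≥
      bb * (1 - g Ybar) * ∑ i ∈ S, x i :=
  stmt3_general S B b x y g bb Ybar hB hb hx hg hvirt
end

section
/- Let r ∈ ℕ, let 0 = θ_0 ≤ θ_1 ≤ … ≤ θ_r ≤ 1 and 0 ≤ Z_1 ≤ … ≤ Z_r ≤ Z_{r+1} = 1 be real numbers, and let g(x) = e^{x-1}. Define the step function Z^c : [0, θ_r) → ℝ by Z^c(y) = Z_k for y ∈ [θ_{k-1}, θ_k), 1 ≤ k ≤ r. Then (∫_0^1 g(z) dz - ∑_{k=1}^{r} θ_k ∫_{Z_k}^{Z_{k+1}} g(z) dz) + ∫_0^{θ_r} (1 - g(Z^c(y))) dy = 1 - 1/e. -/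
/-!
With `g x = exp (x - 1)`, the integral of the step function `1 - g ∘ Zc` is
`∑ₖ (θ k - θ (k - 1)) (1 - g (Z k))`. Summation by parts, with `θ 0 = 0` and
`g (Z (r + 1)) = g 1 = 1`, turns it into `∑ₖ θ k (g (Z (k + 1)) - g (Z k))`, which is the
subtracted sum because `g' = g`. What is left is `∫₀¹ g = 1 - 1/e`.
-/

open MeasureTheory Set Finset Real

theorem integral_exp_sub_one (a b : ℝ) :
    ∫ z in a..b, exp (z - 1) = exp (b - 1) - exp (a - 1) := by
  rw [intervalIntegral.integral_comp_sub_right (fun z => exp z) 1, integral_exp]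

section StepFunction

variable {E : Type*} [NormedAddCommGroup E] {f : ℝ → E} {a b : ℝ} {c : E}

theorem intervalIntegrable_of_eqOn_Ico (hab : a ≤ b) (hf : EqOn f (fun _ => c) (Ico a b)) :
    IntervalIntegrable f volume a b :=
  intervalIntegrable_const.congr_uIoo
    (hf.symm.mono (uIoo_of_le hab ▸ Ioo_subset_Ico_self))

variable [NormedSpace ℝ E] [CompleteSpace E]

theorem integral_of_eqOn_Ico (hab : a ≤ b) (hf : EqOn f (fun _ => c) (Ico a b)) :
    ∫ y in a..b, f y = (b - a) • c := by
  rw [intervalIntegral.integral_congr_Ioo_of_le hab (hf.mono Ioo_subset_Ico_self),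
    intervalIntegral.integral_const]

theorem integral_eq_sum_of_eqOn_Ico {r : ℕ} {θ : ℕ → ℝ} {c : ℕ → E}
    (hθ : ∀ k < r, θ k ≤ θ (k + 1))
    (hf : ∀ k, 1 ≤ k → k ≤ r → EqOn f (fun _ => c k) (Ico (θ (k - 1)) (θ k))) :
    ∫ y in θ 0..θ r, f y = ∑ k ∈ Icc 1 r, (θ k - θ (k - 1)) • c k := by
  have hpiece : ∀ i < r, EqOn f (fun _ => c (i + 1)) (Ico (θ i) (θ (i + 1))) := fun i hi =>
    hf (i + 1) (by omega) hi
  rw [← intervalIntegral.sum_integral_adjacent_intervals fun i hi =>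
      intervalIntegrable_of_eqOn_Ico (hθ i hi) (hpiece i hi),
    ← Finset.Ico_add_one_right_eq_Icc, Finset.sum_Ico_eq_sum_range, Nat.add_sub_cancel]
  refine Finset.sum_congr rfl fun i hi => ?_
  rw [integral_of_eqOn_Ico (hθ i (mem_range.mp hi)) (hpiece i (mem_range.mp hi)), add_comm 1 i,
    Nat.add_sub_cancel]

end StepFunction

theorem sum_Icc_sub_mul_by_parts {R : Type*} [CommRing R] (θ u : ℕ → R) (r : ℕ) :
    ∑ k ∈ Icc 1 r, (θ k - θ (k - 1)) * u k =
      θ r * u (r + 1) - θ 0 * u 1 + ∑ k ∈ Icc 1 r, θ k * (u k - u (k + 1)) := by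
  induction r with
  | zero => simp
  | succ r ih =>
    rw [Finset.sum_Icc_succ_top (by omega), Finset.sum_Icc_succ_top (by omega), ih,
      Nat.add_sub_cancel]
    ring

theorem stmt6_general (r : ℕ) (θ Z : ℕ → ℝ) (Zc : ℝ → ℝ)
    (hθ0 : θ 0 = 0) (hθmono : ∀ k, k < r → θ k ≤ θ (k + 1))
    (hZr1 : Z (r + 1) = 1)
    (hZc : ∀ k, 1 ≤ k → k ≤ r → ∀ y ∈ Set.Ico (θ (k - 1)) (θ k), Zc y = Z k) :
    ((∫ z in (0:ℝ)..1, Real.exp (z - 1)) -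
        ∑ k ∈ Finset.Icc 1 r, θ k * ∫ z in (Z k)..(Z (k + 1)), Real.exp (z - 1)) +
      (∫ y in (0:ℝ)..(θ r), (1 - Real.exp (Zc y - 1))) = 1 - 1 / Real.exp 1 := by
  have hstep : ∫ y in (0:ℝ)..θ r, (1 - exp (Zc y - 1)) =
      ∑ k ∈ Icc 1 r, (θ k - θ (k - 1)) * (1 - exp (Z k - 1)) := by
    rw [← hθ0]
    exact integral_eq_sum_of_eqOn_Ico hθmono fun k hk hkr y hy => by
      simp only [hZc k hk hkr y hy]
  rw [hstep, sum_Icc_sub_mul_by_parts]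
  simp only [integral_exp_sub_one, sub_sub_sub_cancel_left, hθ0, hZr1, sub_self, exp_zero,
    zero_sub, exp_neg]
  ring

/-- Telescoping identity with `g x = e^{x-1}`: with step levels
`0 = θ 0 ≤ … ≤ θ r ≤ 1`, values `0 ≤ Z 1 ≤ … ≤ Z r ≤ Z (r+1) = 1`, and the step
function `Zc` equal to `Z k` on `[θ (k-1), θ k)`, one has
`(∫_0^1 g - ∑_{k=1}^r θ k ∫_{Z k}^{Z (k+1)} g) + ∫_0^{θ r} (1 - g (Zc y)) dy = 1 - 1/e`. -/
theorem stmt6 (r : ℕ) (θ Z : ℕ → ℝ) (Zc : ℝ → ℝ)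
    (hθ0 : θ 0 = 0) (hθmono : ∀ k, k < r → θ k ≤ θ (k + 1)) (hθr : θ r ≤ 1)
    (hZ1 : 0 ≤ Z 1) (hZmono : ∀ k, 1 ≤ k → k ≤ r → Z k ≤ Z (k + 1)) (hZr1 : Z (r + 1) = 1)
    (hZc : ∀ k, 1 ≤ k → k ≤ r → ∀ y ∈ Set.Ico (θ (k - 1)) (θ k), Zc y = Z k) :
    ((∫ z in (0:ℝ)..1, Real.exp (z - 1)) -
        ∑ k ∈ Finset.Icc 1 r, θ k * ∫ z in (Z k)..(Z (k + 1)), Real.exp (z - 1)) +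
      (∫ y in (0:ℝ)..(θ r), (1 - Real.exp (Zc y - 1))) = 1 - 1 / Real.exp 1 :=
  stmt6_general r θ Z Zc hθ0 hθmono hZr1 hZc
end

section
/- Let k ≥ 1 be a natural number, let c_0, …, c_{k-1} be nonnegative real numbers with ∑_{t=0}^{k-1} c_t ≤ 1, and let α ≥ 0 be a real number such that α ≤ ∑_{t=0}^{s} c_t · 2^{t-s} for every s ∈ {0, 1, …, k-1}. Then α ≤ 2/k. In particular, there exists s ∈ {0, …, k-1} with ∑_{t=0}^{s} c_t · 2^{t-s} ≤ 2/k. -/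
/-!
Write `v s = ∑_{t ≤ s} c_t 2^{t-s}` for the normalised value on the truncation at `s`.
Summing over `s < k` and exchanging the order of summation, each `c_t` is weighted by the
geometric tail `∑_{s ≥ t} 2^{t-s} ≤ 2`, so `∑_{s<k} v s ≤ 2 ∑ c_t ≤ 2`. Hence some `v s` is at
most the average `2/k`, and `α` is bounded by it.
-/

open Finset

noncomputable def truncatedValue (c : ℕ → ℝ) (s : ℕ) : ℝ :=
  ∑ t ∈ range (s + 1), c t * 2 ^ ((t : ℤ) - (s : ℤ))

lemma sum_Ico_two_zpow_sub_le (t k : ℕ) :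
    ∑ s ∈ Ico t k, (2 : ℝ) ^ ((t : ℤ) - (s : ℤ)) ≤ 2 := by
  rw [sum_Ico_eq_sum_range]
  calc ∑ j ∈ range (k - t), (2 : ℝ) ^ ((t : ℤ) - ((t + j : ℕ) : ℤ))
      = ∑ j ∈ range (k - t), (1 / 2 : ℝ) ^ j := by
        refine sum_congr rfl fun j _ => ?_
        rw [Nat.cast_add, sub_add_cancel_left, zpow_neg, zpow_natCast, one_div, inv_pow]
    _ ≤ 2 := sum_geometric_two_le _

lemma sum_truncatedValue_eq (c : ℕ → ℝ) (k : ℕ) :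
    ∑ s ∈ range k, truncatedValue c s =
      ∑ t ∈ range k, c t * ∑ s ∈ Ico t k, (2 : ℝ) ^ ((t : ℤ) - (s : ℤ)) := by
  simp only [truncatedValue, mul_sum]
  exact sum_comm' fun s t => by simp only [mem_range, mem_Ico]; omega

lemma sum_truncatedValue_le {c : ℕ → ℝ} (hc : ∀ t, 0 ≤ c t) {k : ℕ}
    (hsum : ∑ t ∈ range k, c t ≤ 1) :
    ∑ s ∈ range k, truncatedValue c s ≤ 2 := by
  rw [sum_truncatedValue_eq]
  calc ∑ t ∈ range k, c t * ∑ s ∈ Ico t k, (2 : ℝ) ^ ((t : ℤ) - (s : ℤ))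
      ≤ ∑ t ∈ range k, c t * 2 :=
        sum_le_sum fun t _ => mul_le_mul_of_nonneg_left (sum_Ico_two_zpow_sub_le t k) (hc t)
    _ = (∑ t ∈ range k, c t) * 2 := (sum_mul ..).symm
    _ ≤ 2 := by linarith

lemma exists_le_div_of_sum_range_le {f : ℕ → ℝ} {k : ℕ} (hk : 1 ≤ k) {B : ℝ}
    (hf : ∑ s ∈ range k, f s ≤ B) : ∃ s < k, f s ≤ B / k := by
  have hk' : (k : ℝ) ≠ 0 := by positivity
  obtain ⟨s, hs, hle⟩ := exists_le_of_sum_le (nonempty_range_iff.mpr (by omega))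
    (show ∑ s ∈ range k, f s ≤ ∑ _s ∈ range k, B / k by
      rwa [sum_const, card_range, nsmul_eq_mul, mul_div_cancel₀ _ hk'])
  exact ⟨s, mem_range.mp hs, hle⟩

theorem stmt9_general (k : ℕ) (hk : 1 ≤ k) (c : ℕ → ℝ) (hc : ∀ t, 0 ≤ c t)
    (hsum : ∑ t ∈ Finset.range k, c t ≤ 1) (α : ℝ)
    (hα : ∀ s, s < k → α ≤ ∑ t ∈ Finset.range (s + 1), c t * 2 ^ ((t : ℤ) - (s : ℤ))) :
    α ≤ 2 / k ∧
      ∃ s, s < k ∧ (∑ t ∈ Finset.range (s + 1), c t * 2 ^ ((t : ℤ) - (s : ℤ))) ≤ 2 / k := by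
  obtain ⟨s, hs, hle⟩ := exists_le_div_of_sum_range_le hk (sum_truncatedValue_le hc hsum)
  exact ⟨(hα s hs).trans hle, s, hs, hle⟩

/-- Factor-revealing LP bound: if `c t ≥ 0`, `∑_{t<k} c t ≤ 1`, `α ≥ 0` and
`α ≤ ∑_{t=0}^s c t · 2^{t-s}` for every `s < k`, then `α ≤ 2/k`; in particular
some `s < k` has `∑_{t=0}^s c t · 2^{t-s} ≤ 2/k`. -/
theorem stmt9 (k : ℕ) (hk : 1 ≤ k) (c : ℕ → ℝ) (hc : ∀ t, 0 ≤ c t)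
    (hsum : ∑ t ∈ Finset.range k, c t ≤ 1) (α : ℝ) (hα0 : 0 ≤ α)
    (hα : ∀ s, s < k → α ≤ ∑ t ∈ Finset.range (s + 1), c t * 2 ^ ((t : ℤ) - (s : ℤ))) :
    α ≤ 2 / k ∧
      ∃ s, s < k ∧ (∑ t ∈ Finset.range (s + 1), c t * 2 ^ ((t : ℤ) - (s : ℤ))) ≤ 2 / k :=
  stmt9_general k hk c hc hsum α hα
end
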